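/- Let f, g, h : ℝ² → ℝ be smooth compactly supported functions. Then ∬_{ℝ²} |f(x,y) g(x,y) h(x,y)| dx dy ≤ C · ‖f‖_{L²} · ‖g‖_{L²}^{1/2} · ‖∂_y g‖_{L²}^{1/2} · ‖h‖_{L²}^{1/2} · ‖∂_x h‖_{L²}^{1/2}, where C is an absolute constant. -/

import Mathlib

open MeasureTheory

noncomputable section

/-- partial derivative in the first variable -/
def px (f : ℝ × ℝ → ℝ) : ℝ × ℝ → ℝ := fun p => fderiv ℝ f p (1, 0)

/-- partial derivative in the second variable -/
def py (f : ℝ × ℝ → ℝ) : ℝ × ℝ → ℝ := fun p => fderiv ℝ f p (0, 1)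

/-- square of the L² norm on ℝ² -/
def L2sq (f : ℝ × ℝ → ℝ) : ℝ := ∫ p : ℝ × ℝ, (f p) ^ 2

/-- the L² norm on ℝ² -/
def L2 (f : ℝ × ℝ → ℝ) : ℝ := (L2sq f) ^ ((1:ℝ)/2)

section Aux

lemma cs_integral {α : Type*} [MeasurableSpace α] {μ : Measure α} {u v : α → ℝ}
    (hu : Integrable (fun p => (u p) ^ 2) μ) (hv : Integrable (fun p => (v p) ^ 2) μ)
    (huv : Integrable (fun p => |u p * v p|) μ) :
    ∫ p, |u p * v p| ∂μ ≤ (∫ p, (u p) ^ 2 ∂μ) ^ ((1:ℝ)/2) * (∫ p, (v p) ^ 2 ∂μ) ^ ((1:ℝ)/2) := by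
  set A := ∫ p, (u p) ^ 2 ∂μ with hA
  set B := ∫ p, (v p) ^ 2 ∂μ with hB
  have hA0 : 0 ≤ A := integral_nonneg fun p => sq_nonneg _
  have hB0 : 0 ≤ B := integral_nonneg fun p => sq_nonneg _
  rcases eq_or_lt_of_le hA0 with hAz | hApos
  · have hu0 : (fun p => (u p) ^ 2) =ᵐ[μ] 0 :=
      (integral_eq_zero_iff_of_nonneg_ae (Filter.Eventually.of_forall fun p => sq_nonneg _) hu).mp hAz.symm
    have h0 : (fun p => |u p * v p|) =ᵐ[μ] 0 := by
      filter_upwards [hu0] with p hp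
      have hup : u p = 0 := by
        have : (u p) ^ 2 = 0 := hp
        exact pow_eq_zero_iff two_ne_zero |>.mp this
      simp [hup]
    rw [integral_congr_ae h0]
    simp only [Pi.zero_apply, integral_zero]
    positivity
  · rcases eq_or_lt_of_le hB0 with hBz | hBpos
    · have hv0 : (fun p => (v p) ^ 2) =ᵐ[μ] 0 :=
        (integral_eq_zero_iff_of_nonneg_ae (Filter.Eventually.of_forall fun p => sq_nonneg _) hv).mp hBz.symm
      have h0 : (fun p => |u p * v p|) =ᵐ[μ] 0 := by
        filter_upwards [hv0] with p hp
        have hvp : v p = 0 := by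
          have : (v p) ^ 2 = 0 := hp
          exact pow_eq_zero_iff two_ne_zero |>.mp this
        simp [hvp]
      rw [integral_congr_ae h0]
      simp only [Pi.zero_apply, integral_zero]
      positivity
    · set t := Real.sqrt (B / A) with htdef
      have ht : 0 < t := Real.sqrt_pos.mpr (div_pos hBpos hApos)
      have ht2 : t = Real.sqrt B / Real.sqrt A := by
        rw [htdef, Real.sqrt_div hB0]
      have hpt : ∀ p, |u p * v p| ≤ (t * (u p) ^ 2 + (v p) ^ 2 / t) / 2 := by
        intro p
        have hexp : t * (u p) ^ 2 + (v p) ^ 2 / t = (t ^ 2 * (u p) ^ 2 + (v p) ^ 2) / t := by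
          field_simp
        rw [hexp, le_div_iff₀ (by norm_num : (0:ℝ) < 2), le_div_iff₀ ht]
        have h1 : |u p * v p| = |u p| * |v p| := abs_mul _ _
        nlinarith [sq_nonneg (t * |u p| - |v p|), sq_abs (u p), sq_abs (v p), abs_nonneg (u p), abs_nonneg (v p)]
      have hint : Integrable (fun p => (t * (u p) ^ 2 + (v p) ^ 2 / t) / 2) μ :=
        (((hu.const_mul t).add (hv.div_const t)).div_const 2)
      have step1 : ∫ p, |u p * v p| ∂μ ≤ (t * A + B / t) / 2 := by
        calc ∫ p, |u p * v p| ∂μ ≤ ∫ p, (t * (u p) ^ 2 + (v p) ^ 2 / t) / 2 ∂μ :=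
              integral_mono huv hint hpt
        _ = (t * A + B / t) / 2 := by
              rw [integral_div, integral_add (hu.const_mul t) (hv.div_const t),
                integral_const_mul, integral_div]
      have hfin : (t * A + B / t) / 2 = A ^ ((1:ℝ)/2) * B ^ ((1:ℝ)/2) := by
        rw [← Real.sqrt_eq_rpow, ← Real.sqrt_eq_rpow]
        have hsA : 0 < Real.sqrt A := Real.sqrt_pos.mpr hApos
        have hsB : 0 < Real.sqrt B := Real.sqrt_pos.mpr hBpos
        have hA2 : Real.sqrt A ^ 2 = A := Real.sq_sqrt hA0
        have hB2 : Real.sqrt B ^ 2 = B := Real.sq_sqrt hB0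
        rw [ht2]
        field_simp
        nlinarith [hA2, hB2]
      linarith [step1, hfin.ge]

lemma closed_emb_snd (x : ℝ) : Topology.IsClosedEmbedding (fun s : ℝ => ((x, s) : ℝ × ℝ)) := by
  have hiso : Isometry (fun s : ℝ => ((x, s) : ℝ × ℝ)) := fun a b => by
    simp [Prod.edist_eq]
  exact hiso.isClosedEmbedding

lemma closed_emb_fst (y : ℝ) : Topology.IsClosedEmbedding (fun s : ℝ => ((s, y) : ℝ × ℝ)) := by
  have hiso : Isometry (fun s : ℝ => ((s, y) : ℝ × ℝ)) := fun a b => by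
    simp [Prod.edist_eq]
  exact hiso.isClosedEmbedding

lemma cont_py {g : ℝ × ℝ → ℝ} (hg : ContDiff ℝ (⊤ : ℕ∞) g) : Continuous (py g) :=
  (hg.continuous_fderiv (by simp)).clm_apply continuous_const

lemma cont_px {g : ℝ × ℝ → ℝ} (hg : ContDiff ℝ (⊤ : ℕ∞) g) : Continuous (px g) :=
  (hg.continuous_fderiv (by simp)).clm_apply continuous_const

lemma hcs_py {g : ℝ × ℝ → ℝ} (hgc : HasCompactSupport g) : HasCompactSupport (py g) :=
  hgc.fderiv_apply ℝ (0, 1)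

lemma hcs_px {g : ℝ × ℝ → ℝ} (hgc : HasCompactSupport g) : HasCompactSupport (px g) :=
  hgc.fderiv_apply ℝ (1, 0)

lemma slice_sq_le {g : ℝ × ℝ → ℝ} (hg : ContDiff ℝ (⊤ : ℕ∞) g) (hgc : HasCompactSupport g)
    (x y : ℝ) : (g (x, y)) ^ 2 ≤ 2 * ∫ t : ℝ, |g (x, t) * py g (x, t)| := by
  have hdiff : ∀ t : ℝ, HasDerivAt (fun s => g (x, s)) (py g (x, t)) t := by
    intro t
    have h1 : HasDerivAt (fun s : ℝ => ((x, s) : ℝ × ℝ)) (0, 1) t :=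
      (hasDerivAt_const t x).prodMk (hasDerivAt_id t)
    exact ((hg.differentiable (by simp) (x, t)).hasFDerivAt).comp_hasDerivAt t h1
  set φ : ℝ → ℝ := fun s => (g (x, s)) ^ 2 with hφdef
  have hφd : ∀ t : ℝ, HasDerivAt φ (2 * g (x, t) * py g (x, t)) t := by
    intro t
    have h2 := (hdiff t).fun_pow 2
    simpa [mul_comm, mul_assoc] using h2
  have hsl : HasCompactSupport (fun s => g (x, s)) :=
    hgc.comp_isClosedEmbedding (closed_emb_snd x)
  have hφc : HasCompactSupport φ := by
    have := hsl.comp_left (g := fun r : ℝ => r ^ 2) (by simp)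
    exact this
  have hφC : ContDiff ℝ 1 φ :=
    ((hg.comp ((contDiff_const (c := x)).prodMk contDiff_id)).pow 2).of_le (by simp)
  have key : ∫ s in Set.Iic y, deriv φ s = φ y := hφc.integral_Iic_deriv_eq hφC y
  have hderiv_eq : deriv φ = fun t => 2 * g (x, t) * py g (x, t) :=
    funext fun t => (hφd t).deriv
  -- integrability of the dominating function
  have hψcont : Continuous (fun t : ℝ => |g (x, t) * py g (x, t)|) := by
    have h1 : Continuous (fun t : ℝ => ((x, t) : ℝ × ℝ)) := by continuity
    exact ((hg.continuous.comp h1).mul ((cont_py hg).comp h1)).abs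
  have hψcs : HasCompactSupport (fun t : ℝ => |g (x, t) * py g (x, t)|) := by
    have h1 : HasCompactSupport (fun t : ℝ => g (x, t) * py g (x, t)) := by
      apply hsl.mono
      intro t ht
      simp only [Function.mem_support] at ht ⊢
      intro h0
      apply ht
      rw [h0, zero_mul]
    exact h1.comp_left (g := fun r : ℝ => |r|) abs_zero
  have hψint : Integrable (fun t : ℝ => |g (x, t) * py g (x, t)|) :=
    hψcont.integrable_of_hasCompactSupport hψcs
  have step : ∫ s in Set.Iic y, deriv φ s ≤ ∫ t : ℝ, 2 * |g (x, t) * py g (x, t)| := by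
    calc ∫ s in Set.Iic y, deriv φ s
        ≤ ∫ s in Set.Iic y, 2 * |g (x, s) * py g (x, s)| := by
          apply setIntegral_mono
          · rw [hderiv_eq]
            have : Continuous (fun t : ℝ => 2 * g (x, t) * py g (x, t)) := by
              have h1 : Continuous (fun t : ℝ => ((x, t) : ℝ × ℝ)) := by continuity
              exact (continuous_const.mul (hg.continuous.comp h1)).mul ((cont_py hg).comp h1)
            have hcs2 : HasCompactSupport (fun t : ℝ => 2 * g (x, t) * py g (x, t)) := by
              apply hsl.mono
              intro t ht
              simp only [Function.mem_support] at ht ⊢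
              intro h0
              apply ht
              rw [h0]; ring
            exact (this.integrable_of_hasCompactSupport hcs2).integrableOn
          · exact (hψint.const_mul 2).integrableOn
          · intro s
            rw [hderiv_eq]
            calc 2 * g (x, s) * py g (x, s) ≤ |2 * g (x, s) * py g (x, s)| := le_abs_self _
            _ = 2 * |g (x, s) * py g (x, s)| := by
                rw [mul_assoc, abs_mul]
                norm_num
    _ ≤ ∫ t : ℝ, 2 * |g (x, t) * py g (x, t)| :=
          setIntegral_le_integral (hψint.const_mul 2)
            (Filter.Eventually.of_forall fun t => by positivity)
  rw [← integral_const_mul]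
  calc (g (x, y)) ^ 2 = φ y := rfl
  _ = ∫ s in Set.Iic y, deriv φ s := key.symm
  _ ≤ _ := step

lemma slice_sq_le' {h : ℝ × ℝ → ℝ} (hh : ContDiff ℝ (⊤ : ℕ∞) h) (hhc : HasCompactSupport h)
    (x y : ℝ) : (h (x, y)) ^ 2 ≤ 2 * ∫ s : ℝ, |h (s, y) * px h (s, y)| := by
  have hdiff : ∀ t : ℝ, HasDerivAt (fun s => h (s, y)) (px h (t, y)) t := by
    intro t
    have h1 : HasDerivAt (fun s : ℝ => ((s, y) : ℝ × ℝ)) (1, 0) t :=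
      (hasDerivAt_id t).prodMk (hasDerivAt_const t y)
    exact ((hh.differentiable (by simp) (t, y)).hasFDerivAt).comp_hasDerivAt t h1
  set φ : ℝ → ℝ := fun s => (h (s, y)) ^ 2 with hφdef
  have hφd : ∀ t : ℝ, HasDerivAt φ (2 * h (t, y) * px h (t, y)) t := by
    intro t
    have h2 := (hdiff t).fun_pow 2
    simpa [mul_comm, mul_assoc] using h2
  have hsl : HasCompactSupport (fun s => h (s, y)) :=
    hhc.comp_isClosedEmbedding (closed_emb_fst y)
  have hφc : HasCompactSupport φ := by
    have := hsl.comp_left (g := fun r : ℝ => r ^ 2) (by simp)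
    exact this
  have hφC : ContDiff ℝ 1 φ :=
    ((hh.comp (contDiff_id.prodMk (contDiff_const (c := y)))).pow 2).of_le (by simp)
  have key : ∫ s in Set.Iic x, deriv φ s = φ x := hφc.integral_Iic_deriv_eq hφC x
  have hderiv_eq : deriv φ = fun t => 2 * h (t, y) * px h (t, y) :=
    funext fun t => (hφd t).deriv
  have hψcont : Continuous (fun t : ℝ => |h (t, y) * px h (t, y)|) := by
    have h1 : Continuous (fun t : ℝ => ((t, y) : ℝ × ℝ)) := by continuity
    exact ((hh.continuous.comp h1).mul ((cont_px hh).comp h1)).abs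
  have hψcs : HasCompactSupport (fun t : ℝ => |h (t, y) * px h (t, y)|) := by
    have h1 : HasCompactSupport (fun t : ℝ => h (t, y) * px h (t, y)) := by
      apply hsl.mono
      intro t ht
      simp only [Function.mem_support] at ht ⊢
      intro h0
      apply ht
      rw [h0, zero_mul]
    exact h1.comp_left (g := fun r : ℝ => |r|) abs_zero
  have hψint : Integrable (fun t : ℝ => |h (t, y) * px h (t, y)|) :=
    hψcont.integrable_of_hasCompactSupport hψcs
  have step : ∫ s in Set.Iic x, deriv φ s ≤ ∫ t : ℝ, 2 * |h (t, y) * px h (t, y)| := by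
    calc ∫ s in Set.Iic x, deriv φ s
        ≤ ∫ s in Set.Iic x, 2 * |h (s, y) * px h (s, y)| := by
          apply setIntegral_mono
          · rw [hderiv_eq]
            have hcnt : Continuous (fun t : ℝ => 2 * h (t, y) * px h (t, y)) := by
              have h1 : Continuous (fun t : ℝ => ((t, y) : ℝ × ℝ)) := by continuity
              exact (continuous_const.mul (hh.continuous.comp h1)).mul ((cont_px hh).comp h1)
            have hcs2 : HasCompactSupport (fun t : ℝ => 2 * h (t, y) * px h (t, y)) := by
              apply hsl.mono
              intro t ht
              simp only [Function.mem_support] at ht ⊢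
              intro h0
              apply ht
              rw [h0]; ring
            exact (hcnt.integrable_of_hasCompactSupport hcs2).integrableOn
          · exact (hψint.const_mul 2).integrableOn
          · intro s
            rw [hderiv_eq]
            calc 2 * h (s, y) * px h (s, y) ≤ |2 * h (s, y) * px h (s, y)| := le_abs_self _
            _ = 2 * |h (s, y) * px h (s, y)| := by
                rw [mul_assoc, abs_mul]
                norm_num
    _ ≤ ∫ t : ℝ, 2 * |h (t, y) * px h (t, y)| :=
          setIntegral_le_integral (hψint.const_mul 2)
            (Filter.Eventually.of_forall fun t => by positivity)
  rw [← integral_const_mul]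
  calc (h (x, y)) ^ 2 = φ x := rfl
  _ = ∫ s in Set.Iic x, deriv φ s := key.symm
  _ ≤ _ := step
end Aux

/-- The anisotropic trilinear estimate (Lemma 2.1):
`∬ |f g h| ≤ C ‖f‖₂ ‖g‖₂^{1/2} ‖∂_y g‖₂^{1/2} ‖h‖₂^{1/2} ‖∂_x h‖₂^{1/2}`. -/
theorem trilinear_anisotropic :
    ∃ C > 0, ∀ f g h : ℝ × ℝ → ℝ,
      ContDiff ℝ (⊤ : ℕ∞) f → HasCompactSupport f →
      ContDiff ℝ (⊤ : ℕ∞) g → HasCompactSupport g →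
      ContDiff ℝ (⊤ : ℕ∞) h → HasCompactSupport h →
      (∫ p : ℝ × ℝ, |f p * g p * h p|) ≤
        C * L2 f * (L2 g) ^ ((1:ℝ)/2) * (L2 (py g)) ^ ((1:ℝ)/2) *
          (L2 h) ^ ((1:ℝ)/2) * (L2 (px h)) ^ ((1:ℝ)/2) := by
  refine ⟨2, by norm_num, ?_⟩
  intro f g h hf hfc hg hgc hh hhc
  have hfC : Continuous f := hf.continuous
  have hgC : Continuous g := hg.continuous
  have hhC : Continuous h := hh.continuous
  have hpygC : Continuous (py g) := cont_py hg
  have hpxhC : Continuous (px h) := cont_px hh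
  have hpygc : HasCompactSupport (py g) := hcs_py hgc
  have hpxhc : HasCompactSupport (px h) := hcs_px hhc
  -- integrability of all the squares and products
  have sq_cs : ∀ u : ℝ × ℝ → ℝ, HasCompactSupport u → HasCompactSupport (fun p => (u p) ^ 2) :=
    fun u hu => hu.comp_left (g := fun r : ℝ => r ^ 2) (by simp)
  have int_f2 : Integrable (fun p : ℝ × ℝ => (f p) ^ 2) :=
    (hfC.pow 2).integrable_of_hasCompactSupport (sq_cs f hfc)
  have int_g2 : Integrable (fun p : ℝ × ℝ => (g p) ^ 2) :=
    (hgC.pow 2).integrable_of_hasCompactSupport (sq_cs g hgc)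
  have int_h2 : Integrable (fun p : ℝ × ℝ => (h p) ^ 2) :=
    (hhC.pow 2).integrable_of_hasCompactSupport (sq_cs h hhc)
  have int_pyg2 : Integrable (fun p : ℝ × ℝ => (py g p) ^ 2) :=
    (hpygC.pow 2).integrable_of_hasCompactSupport (sq_cs _ hpygc)
  have int_pxh2 : Integrable (fun p : ℝ × ℝ => (px h p) ^ 2) :=
    (hpxhC.pow 2).integrable_of_hasCompactSupport (sq_cs _ hpxhc)
  have int_gh2 : Integrable (fun p : ℝ × ℝ => (g p * h p) ^ 2) :=
    ((hgC.mul hhC).pow 2).integrable_of_hasCompactSupport (sq_cs _ (hgc.mul_right))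
  have int_fgh : Integrable (fun p : ℝ × ℝ => |f p * (g p * h p)|) :=
    ((hfC.mul (hgC.mul hhC)).abs).integrable_of_hasCompactSupport
      ((hfc.mul_right).comp_left (g := fun r : ℝ => |r|) abs_zero)
  -- the two auxiliary integrals
  set Φg : ℝ × ℝ → ℝ := fun p => |g p * py g p| with hΦgdef
  set Φh : ℝ × ℝ → ℝ := fun p => |h p * px h p| with hΦhdef
  have hΦgint : Integrable Φg :=
    ((hgC.mul hpygC).abs).integrable_of_hasCompactSupport
      ((hgc.mul_right).comp_left (g := fun r : ℝ => |r|) abs_zero)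
  have hΦhint : Integrable Φh :=
    ((hhC.mul hpxhC).abs).integrable_of_hasCompactSupport
      ((hhc.mul_right).comp_left (g := fun r : ℝ => |r|) abs_zero)
  have hΦgint' : Integrable Φg ((volume : Measure ℝ).prod volume) := hΦgint
  have hΦhint' : Integrable Φh ((volume : Measure ℝ).prod volume) := hΦhint
  set G : ℝ → ℝ := fun x => ∫ t : ℝ, Φg (x, t) with hGdef
  set K : ℝ → ℝ := fun y => ∫ s : ℝ, Φh (s, y) with hKdef
  have hGint : Integrable G := hΦgint'.integral_prod_left
  have hKint : Integrable K := hΦhint'.integral_prod_right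
  have hG0 : ∀ x, 0 ≤ G x := fun x => integral_nonneg fun t => abs_nonneg _
  have hK0 : ∀ y, 0 ≤ K y := fun y => integral_nonneg fun s => abs_nonneg _
  -- pointwise bound
  have hpoint : ∀ p : ℝ × ℝ, (g p * h p) ^ 2 ≤ 4 * (G p.1 * K p.2) := by
    rintro ⟨x, y⟩
    have h1 : (g (x, y)) ^ 2 ≤ 2 * G x := slice_sq_le hg hgc x y
    have h2 : (h (x, y)) ^ 2 ≤ 2 * K y := slice_sq_le' hh hhc x y
    calc (g (x, y) * h (x, y)) ^ 2 = (g (x, y)) ^ 2 * (h (x, y)) ^ 2 := by ring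
    _ ≤ (2 * G x) * (2 * K y) :=
        mul_le_mul h1 h2 (sq_nonneg _) (by have := hG0 x; linarith)
    _ = 4 * (G x * K y) := by ring
  have hGKint : Integrable (fun p : ℝ × ℝ => G p.1 * K p.2) := hGint.mul_prod hKint
  set Q := ∫ p : ℝ × ℝ, (g p * h p) ^ 2 with hQdef
  have hQ0 : 0 ≤ Q := integral_nonneg fun p => sq_nonneg _
  have hIG0 : 0 ≤ ∫ x, G x := integral_nonneg hG0
  have hIK0 : 0 ≤ ∫ y, K y := integral_nonneg hK0
  have hQle : Q ≤ 4 * ((∫ x, G x) * ∫ y, K y) := by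
    calc Q ≤ ∫ p : ℝ × ℝ, 4 * (G p.1 * K p.2) :=
          integral_mono int_gh2 (hGKint.const_mul 4) hpoint
    _ = 4 * ∫ p : ℝ × ℝ, G p.1 * K p.2 := integral_const_mul 4 _
    _ = 4 * ((∫ x, G x) * ∫ y, K y) := by
        rw [show (volume : Measure (ℝ × ℝ)) = (volume : Measure ℝ).prod volume from rfl,
          integral_prod_mul]
  -- Cauchy–Schwarz on the auxiliary integrals
  have hIG : ∫ x, G x ≤ L2 g * L2 (py g) := by
    have heq : ∫ x, G x = ∫ p : ℝ × ℝ, Φg p := (integral_prod Φg hΦgint').symm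
    rw [heq]
    exact cs_integral int_g2 int_pyg2 hΦgint
  have hIK : ∫ y, K y ≤ L2 h * L2 (px h) := by
    have heq : ∫ y, K y = ∫ p : ℝ × ℝ, Φh p := (integral_prod_symm Φh hΦhint').symm
    rw [heq]
    exact cs_integral int_h2 int_pxh2 hΦhint
  have hL2 : ∀ u : ℝ × ℝ → ℝ, 0 ≤ L2 u := fun u =>
    Real.rpow_nonneg (integral_nonneg fun p => sq_nonneg _) _
  set a := L2 g; set b := L2 (py g); set c := L2 h; set d := L2 (px h)
  have ha : 0 ≤ a := hL2 g
  have hb : 0 ≤ b := hL2 (py g)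
  have hc : 0 ≤ c := hL2 h
  have hd : 0 ≤ d := hL2 (px h)
  have hQle2 : Q ≤ 4 * ((a * b) * (c * d)) := by
    refine hQle.trans ?_
    have := mul_le_mul hIG hIK hIK0 (by positivity)
    linarith
  have hQr : Q ^ ((1:ℝ)/2) ≤ 2 * (a ^ ((1:ℝ)/2) * b ^ ((1:ℝ)/2) * (c ^ ((1:ℝ)/2) * d ^ ((1:ℝ)/2))) := by
    have h1 : Q ^ ((1:ℝ)/2) ≤ (4 * ((a * b) * (c * d))) ^ ((1:ℝ)/2) :=
      Real.rpow_le_rpow hQ0 hQle2 (by norm_num)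
    refine h1.trans_eq ?_
    rw [Real.mul_rpow (by norm_num) (by positivity),
      Real.mul_rpow (by positivity) (by positivity),
      Real.mul_rpow ha hb, Real.mul_rpow hc hd]
    congr 1
    rw [show (4:ℝ) = 2 ^ (2:ℕ) by norm_num, ← Real.rpow_natCast 2 2,
      ← Real.rpow_mul (by norm_num : (0:ℝ) ≤ 2)]
    norm_num
  -- the main Cauchy–Schwarz
  have cs1 := cs_integral int_f2 int_gh2 int_fgh
  have hL2f : L2 f = (∫ p : ℝ × ℝ, (f p) ^ 2) ^ ((1:ℝ)/2) := rfl
  have hQeq : Q ^ ((1:ℝ)/2) = (∫ p : ℝ × ℝ, (g p * h p) ^ 2) ^ ((1:ℝ)/2) := rfl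
  calc (∫ p : ℝ × ℝ, |f p * g p * h p|)
      = ∫ p : ℝ × ℝ, |f p * (g p * h p)| := by simp only [mul_assoc]
  _ ≤ (∫ p : ℝ × ℝ, (f p) ^ 2) ^ ((1:ℝ)/2) * (∫ p : ℝ × ℝ, (g p * h p) ^ 2) ^ ((1:ℝ)/2) := cs1
  _ = L2 f * Q ^ ((1:ℝ)/2) := by rw [hL2f, hQeq]
  _ ≤ L2 f * (2 * (a ^ ((1:ℝ)/2) * b ^ ((1:ℝ)/2) * (c ^ ((1:ℝ)/2) * d ^ ((1:ℝ)/2)))) :=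
      mul_le_mul_of_nonneg_left hQr (hL2 f)
  _ = 2 * L2 f * a ^ ((1:ℝ)/2) * b ^ ((1:ℝ)/2) * c ^ ((1:ℝ)/2) * d ^ ((1:ℝ)/2) := by ring

end
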